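/- Let L be a densely defined operator on L^p(ℝ^N) such that every λ with Re λ in a sector Σ satisfies |λ|‖u‖_p ≤ C‖λu − Lu‖_p, and suppose the interpolation inequalities ‖a^{h/2}D^h u‖_p ≤ ε^{4-h}‖a²D⁴u‖_p + (C/ε^h)‖u‖_p (h = 1,2,3) and ‖a²D⁴u‖_p ≤ C(‖Lu‖_p + ‖u‖_p) hold. Then there exist r_p > 0 and C' > 0 such that for every λ with Re λ > r_p and every u in the domain: |λ|‖u‖_p + |λ|^{3/4}‖a^{1/2}Du‖_p + |λ|^{1/2}‖aD²u‖_p + |λ|^{1/4}‖a^{3/2}D³u‖_p + ‖a²D⁴u‖_p ≤ C'‖λu − Lu‖_p. -/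

import Mathlib

set_option maxHeartbeats 1000000 in
/-- abstract form of the weighted Agmon-type resolvent estimate.
`X = L^p(ℝ^N)`, `L` the operator, `D` its domain; `n1 u = ‖a^{1/2}Du‖_p`,
`n2 u = ‖aD²u‖_p`, `n3 u = ‖a^{3/2}D³u‖_p`, `n4 u = ‖a²D⁴u‖_p`.
Assuming the sectorial resolvent estimate `|λ|‖u‖ ≤ C‖λu − Lu‖` for `Re λ > r₀`,
the interpolation inequalities `n_h u ≤ ε^{4-h} n4 u + (C/ε^h)‖u‖` (h = 1,2,3) and
`n4 u ≤ C(‖Lu‖ + ‖u‖)`, there are `r_p > 0` and `C' > 0` such that for `Re λ > r_p`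
and `u ∈ D`:
`|λ|‖u‖ + |λ|^{3/4} n1 u + |λ|^{1/2} n2 u + |λ|^{1/4} n3 u + n4 u ≤ C'‖λ•u − Lu‖`. -/
theorem stmt_16 {X : Type*} [NormedAddCommGroup X] [NormedSpace ℂ X]
    (L : X → X) (D : Set X) (n1 n2 n3 n4 : X → ℝ)
    (hpos : ∀ u ∈ D, 0 ≤ n1 u ∧ 0 ≤ n2 u ∧ 0 ≤ n3 u ∧ 0 ≤ n4 u)
    (C εbar r₀ : ℝ) (hC : 0 < C) (hεbar : 0 < εbar) (hr₀ : 0 < r₀)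
    (hsect : ∀ lam : ℂ, r₀ < lam.re → ∀ u ∈ D,
      ‖lam‖ * ‖u‖ ≤ C * ‖lam • u - L u‖)
    (hinterp1 : ∀ ε : ℝ, 0 < ε → ε < εbar → ∀ u ∈ D,
      n1 u ≤ ε ^ 3 * n4 u + (C / ε) * ‖u‖)
    (hinterp2 : ∀ ε : ℝ, 0 < ε → ε < εbar → ∀ u ∈ D,
      n2 u ≤ ε ^ 2 * n4 u + (C / ε ^ 2) * ‖u‖)
    (hinterp3 : ∀ ε : ℝ, 0 < ε → ε < εbar → ∀ u ∈ D,
      n3 u ≤ ε * n4 u + (C / ε ^ 3) * ‖u‖)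
    (hCZ : ∀ u ∈ D, n4 u ≤ C * (‖L u‖ + ‖u‖)) :
    ∃ rp > (0:ℝ), ∃ C' > (0:ℝ), ∀ lam : ℂ, rp < lam.re → ∀ u ∈ D,
      ‖lam‖ * ‖u‖ + (‖lam‖) ^ ((3:ℝ)/4) * n1 u
        + (‖lam‖) ^ ((1:ℝ)/2) * n2 u + (‖lam‖) ^ ((1:ℝ)/4) * n3 u
        + n4 u ≤ C' * ‖lam • u - L u‖ := by
  classical
  set m : ℝ := max r₀ (max 1 (εbar⁻¹ ^ 4)) with hm
  have hmr₀ : r₀ ≤ m := le_max_left _ _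
  have hm1 : (1:ℝ) ≤ m := le_trans (le_max_left 1 _) (le_max_right _ _)
  have hmε : εbar⁻¹ ^ 4 ≤ m := le_trans (le_max_right 1 _) (le_max_right _ _)
  refine ⟨m + 1, by linarith, C + 3 * C ^ 2 + 4 * (C * (2 * C + 1)) + 1, by nlinarith, ?_⟩
  intro lam hlam u hu
  obtain ⟨h1p, h2p, h3p, h4p⟩ := hpos u hu
  set A := ‖lam‖ with hA
  have hre : lam.re ≤ A := Complex.re_le_norm lam
  have hAm : m + 1 < A := lt_of_lt_of_le hlam hre
  have hA0 : (0:ℝ) < A := by linarith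
  have hA1 : (1:ℝ) < A := by linarith
  have hsec := hsect lam (by linarith) u hu
  set R := ‖lam • u - L u‖ with hR
  have hR0 : 0 ≤ R := norm_nonneg _
  have huR : ‖u‖ ≤ C * R := by nlinarith [norm_nonneg u]
  have hAuR : A * ‖u‖ ≤ C * R := hsec
  have hLu : ‖L u‖ ≤ (C + 1) * R := by
    have heq : L u = lam • u - (lam • u - L u) := by abel
    calc ‖L u‖ = ‖lam • u - (lam • u - L u)‖ := by rw [← heq]
      _ ≤ ‖lam • u‖ + ‖lam • u - L u‖ := norm_sub_le _ _
      _ = A * ‖u‖ + R := by rw [norm_smul]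
      _ ≤ C * R + R := by linarith
      _ = (C + 1) * R := by ring
  have hn4 : n4 u ≤ C * (2 * C + 1) * R := by
    have h := hCZ u hu
    nlinarith
  -- the substitution ε = |λ|^{-1/4}
  set ε : ℝ := A ^ (-(1/4 : ℝ)) with hε
  have hεpos : 0 < ε := Real.rpow_pos_of_pos hA0 _
  have epow : ∀ k : ℕ, ε ^ k = A ^ (-((k : ℝ) / 4)) := by
    intro k
    rw [hε, ← Real.rpow_natCast (A ^ (-(1/4 : ℝ))) k, ← Real.rpow_mul hA0.le]
    congr 1
    ring
  have hε4 : ε ^ 4 = A⁻¹ := by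
    rw [epow 4]
    norm_num [Real.rpow_neg_one]
  have hεlt : ε < εbar := by
    have hAgt : (εbar ^ 4)⁻¹ < A := by
      rw [← inv_pow]; linarith
    have h0 : (0:ℝ) < εbar ^ 4 := by positivity
    have h4 : ε ^ 4 < εbar ^ 4 := by
      rw [hε4]
      have h1 : A⁻¹ * A = 1 := inv_mul_cancel₀ hA0.ne'
      have h2 : (εbar ^ 4)⁻¹ * εbar ^ 4 = 1 := inv_mul_cancel₀ h0.ne'
      nlinarith [inv_pos.mpr hA0]
    exact lt_of_pow_lt_pow_left₀ 4 hεbar.le h4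
  have key : ∀ s t : ℝ, A ^ s * A ^ t = A ^ (s + t) := fun s t => (Real.rpow_add hA0 s t).symm
  have ediv : ∀ k : ℕ, C / ε ^ k = C * A ^ ((k : ℝ) / 4) := by
    intro k
    rw [epow k, Real.rpow_neg hA0.le, div_eq_mul_inv, inv_inv]
  have ediv1 : C / ε = C * A ^ ((1:ℝ) / 4) := by
    have := ediv 1; simpa using this
  -- products
  have P3 : A ^ ((3:ℝ)/4) * ε ^ 3 = 1 := by
    rw [epow 3, key]; norm_num
  have P2 : A ^ ((1:ℝ)/2) * ε ^ 2 = 1 := by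
    rw [epow 2, key]; norm_num
  have P1 : A ^ ((1:ℝ)/4) * ε = 1 := by
    have := epow 1
    rw [pow_one] at this
    rw [this, key]; norm_num
  have Q3 : A ^ ((3:ℝ)/4) * A ^ ((1:ℝ)/4) = A := by
    rw [key]; norm_num
  have Q2 : A ^ ((1:ℝ)/2) * A ^ ((2:ℝ)/4) = A := by
    rw [key]; norm_num
  have Q1 : A ^ ((1:ℝ)/4) * A ^ ((3:ℝ)/4) = A := by
    rw [key]; norm_num
  have B3 : (0:ℝ) ≤ A ^ ((3:ℝ)/4) := (Real.rpow_pos_of_pos hA0 _).le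
  have B2 : (0:ℝ) ≤ A ^ ((1:ℝ)/2) := (Real.rpow_pos_of_pos hA0 _).le
  have B1 : (0:ℝ) ≤ A ^ ((1:ℝ)/4) := (Real.rpow_pos_of_pos hA0 _).le
  have t1 : A ^ ((3:ℝ)/4) * n1 u ≤ n4 u + C * (C * R) := by
    have hi := hinterp1 ε hεpos hεlt u hu
    calc A ^ ((3:ℝ)/4) * n1 u
        ≤ A ^ ((3:ℝ)/4) * (ε ^ 3 * n4 u + C / ε * ‖u‖) :=
          mul_le_mul_of_nonneg_left hi B3
      _ = (A ^ ((3:ℝ)/4) * ε ^ 3) * n4 u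
            + C * ((A ^ ((3:ℝ)/4) * A ^ ((1:ℝ)/4)) * ‖u‖) := by
          rw [ediv1]; ring
      _ = n4 u + C * (A * ‖u‖) := by rw [P3, Q3, one_mul]
      _ ≤ n4 u + C * (C * R) := by nlinarith
  have t2 : A ^ ((1:ℝ)/2) * n2 u ≤ n4 u + C * (C * R) := by
    have hi := hinterp2 ε hεpos hεlt u hu
    calc A ^ ((1:ℝ)/2) * n2 u
        ≤ A ^ ((1:ℝ)/2) * (ε ^ 2 * n4 u + C / ε ^ 2 * ‖u‖) :=
          mul_le_mul_of_nonneg_left hi B2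
      _ = (A ^ ((1:ℝ)/2) * ε ^ 2) * n4 u
            + C * ((A ^ ((1:ℝ)/2) * A ^ ((2:ℝ)/4)) * ‖u‖) := by
          rw [ediv 2]; push_cast; ring
      _ = n4 u + C * (A * ‖u‖) := by rw [P2, Q2, one_mul]
      _ ≤ n4 u + C * (C * R) := by nlinarith
  have t3 : A ^ ((1:ℝ)/4) * n3 u ≤ n4 u + C * (C * R) := by
    have hi := hinterp3 ε hεpos hεlt u hu
    calc A ^ ((1:ℝ)/4) * n3 u
        ≤ A ^ ((1:ℝ)/4) * (ε * n4 u + C / ε ^ 3 * ‖u‖) :=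
          mul_le_mul_of_nonneg_left hi B1
      _ = (A ^ ((1:ℝ)/4) * ε) * n4 u
            + C * ((A ^ ((1:ℝ)/4) * A ^ ((3:ℝ)/4)) * ‖u‖) := by
          rw [ediv 3]; push_cast; ring
      _ = n4 u + C * (A * ‖u‖) := by rw [P1, Q1, one_mul]
      _ ≤ n4 u + C * (C * R) := by nlinarith
  nlinarith [hn4, t1, t2, t3, hAuR, hR0]
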